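/- arXiv:2603.05676 — 8 statements merged into one kernel-verified Lean document; each statement's English description precedes it below -/
import Mathlib

section
/- Let a ≥ 1 and let w < x < y < z ≤ 2^a − 1 be natural numbers (the midpoints of four consecutive runs R₄, R₃, R₂, R₁ from left to right), and let m be any natural number with x ≤ m ≤ y (the midpoint of the run obtained by merging R₃ and R₂). Write P(s, e) := min_{s < i ≤ e} p(i) with p(i) = (a − 1) − ν₂(i). Then: (i) if P(x, y) > P(y, z), then P(m, z) = P(y, z); and (ii) if P(x, y) ≥ P(w, x), then P(w, m) = P(w, x). That is, merging runs R₃ and R₂ in PowerSort changes neither the power of the merged run (which equals the old power of R₂) nor the power of the run R₄ below it. -/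
/-- The power of index `i` in an array of size `n = 2^a − 1`:
`p(i) = (a − 1) − ν₂(i)`. -/
def indexPower (a i : ℕ) : ℕ := (a - 1) - padicValNat 2 i

/-- The power of the interval `(s, e]`: the minimum index power over `s < i ≤ e`. -/
noncomputable def intervalPower (a s e : ℕ) : ℕ := sInf (indexPower a '' Set.Ioc s e)

lemma intervalPower_nonempty (a s e : ℕ) (h : s < e) :
    (indexPower a '' Set.Ioc s e).Nonempty :=
  ⟨indexPower a e, ⟨e, ⟨h, le_refl e⟩, rfl⟩⟩

lemma intervalPower_mono (a s s' e e' : ℕ) (hs : s ≤ s') (he : e' ≤ e) (h : s' < e') :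
    intervalPower a s e ≤ intervalPower a s' e' := by
  have hmem := Nat.sInf_mem (intervalPower_nonempty a s' e' h)
  apply Nat.sInf_le
  obtain ⟨i, hi, hie⟩ := hmem
  exact ⟨i, ⟨lt_of_le_of_lt hs hi.1, le_trans hi.2 he⟩, hie⟩

lemma intervalPower_split (a s m e : ℕ) (h1 : s < m) (h2 : m < e) :
    intervalPower a s e = min (intervalPower a s m) (intervalPower a m e) := by
  apply le_antisymm
  · apply le_min
    · exact intervalPower_mono a s s e m le_rfl (le_of_lt h2) h1
    · exact intervalPower_mono a s m e e (le_of_lt h1) le_rfl h2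
  · have hmem := Nat.sInf_mem (intervalPower_nonempty a s e (h1.trans h2))
    obtain ⟨i, ⟨his, hie⟩, hiv⟩ := hmem
    rcases le_or_gt i m with him | him
    · calc min (intervalPower a s m) (intervalPower a m e) ≤ intervalPower a s m :=
            min_le_left _ _
        _ ≤ indexPower a i := Nat.sInf_le ⟨i, ⟨his, him⟩, rfl⟩
        _ = intervalPower a s e := hiv
    · calc min (intervalPower a s m) (intervalPower a m e) ≤ intervalPower a m e :=
            min_le_right _ _
        _ ≤ indexPower a i := Nat.sInf_le ⟨i, ⟨him, hie⟩, rfl⟩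
        _ = intervalPower a s e := hiv

/-- Merging runs `R₃` and `R₂` in PowerSort changes neither the power of the merged
run (which equals the old power of `R₂`) nor the power of the run `R₄` below it.
Here `w < x < y < z` are the midpoints of four consecutive runs `R₄, R₃, R₂, R₁`,
and `m` (with `x ≤ m ≤ y`) is the midpoint of the run obtained by merging `R₃`
and `R₂`. -/
theorem merge_preserves_powers (a w x y z m : ℕ) (ha : 1 ≤ a) (hwx : w < x)
    (hxy : x < y) (hyz : y < z) (hz : z ≤ 2 ^ a - 1) (hxm : x ≤ m) (hmy : m ≤ y) :
    (intervalPower a y z < intervalPower a x y →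
      intervalPower a m z = intervalPower a y z) ∧
    (intervalPower a w x ≤ intervalPower a x y →
      intervalPower a w m = intervalPower a w x) := by
  constructor
  · intro h
    rcases eq_or_lt_of_le hmy with rfl | hmy'
    · rfl
    · rw [intervalPower_split a m y z hmy' hyz]
      have hmy2 : intervalPower a x y ≤ intervalPower a m y :=
        intervalPower_mono a x m y y hxm le_rfl hmy'
      omega
  · intro h
    rcases eq_or_lt_of_le hxm with rfl | hxm'
    · rfl
    · rw [intervalPower_split a w x m hwx hxm']
      have hxm2 : intervalPower a x y ≤ intervalPower a x m :=
        intervalPower_mono a x x y m le_rfl hmy hxm'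
      omega
end

section
/- Let a ≥ 1 and let x < y < z ≤ 2^a − 1 be natural numbers, and write P(s, e) := min_{s < i ≤ e} p(i) with p(i) = (a − 1) − ν₂(i). If P(x, y) > P(y, z) (i.e., PowerSort's merge condition between the runs with midpoints x, y, z holds, with p₃ := P(x, y)), then z − x ≥ 2^{(a−1) − P(x,y)}. That is, when runs R₃ and R₂ are merged, the distance between the midpoints of R₃ and R₁ is at least (n+1)/2^{p₃+1}. -/
/-- When runs `R₃` and `R₂` (with midpoints `x < y < z` of `R₃, R₂, R₁`) are merged in
PowerSort, i.e. `p₃ = P(x,y) > P(y,z) = p₂`, the distance between the midpoints of `R₃`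
and `R₁` is at least `2^((a−1)−p₃) = (n+1)/2^(p₃+1)`. -/
theorem merge_midpoint_distance (a x y z : ℕ) (ha : 1 ≤ a) (hxy : x < y) (hyz : y < z)
    (hz : z ≤ 2 ^ a - 1) (hmerge : intervalPower a y z < intervalPower a x y) :
    2 ^ ((a - 1) - intervalPower a x y) ≤ z - x := by
  have hne1 : (indexPower a '' Set.Ioc x y).Nonempty :=
    ⟨indexPower a y, y, ⟨hxy, le_refl y⟩, rfl⟩
  have hne2 : (indexPower a '' Set.Ioc y z).Nonempty :=
    ⟨indexPower a z, z, ⟨hyz, le_refl z⟩, rfl⟩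
  obtain ⟨i₀, hi₀, hpi₀⟩ := Nat.sInf_mem hne1
  obtain ⟨j, hj, hpj⟩ := Nat.sInf_mem hne2
  obtain ⟨hxi, hiy⟩ := hi₀
  obtain ⟨hyj, hjz⟩ := hj
  set v := padicValNat 2 i₀ with hv
  set w := padicValNat 2 j with hw
  have h1 : a - 1 - v = intervalPower a x y := hpi₀
  have h2 : a - 1 - w = intervalPower a y z := hpj
  -- key arithmetic facts
  have hp1 : 1 ≤ intervalPower a x y := by omega
  have hveq : a - 1 - intervalPower a x y = v := by omega
  have hvw : v ≤ w := by omega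
  have hi₀pos : i₀ ≠ 0 := by omega
  have hjpos : j ≠ 0 := by omega
  have hdvd1 : 2 ^ v ∣ i₀ := pow_padicValNat_dvd
  have hdvd2 : 2 ^ v ∣ j := dvd_trans (pow_dvd_pow 2 hvw) pow_padicValNat_dvd
  have hdvd3 : 2 ^ v ∣ j - i₀ := Nat.dvd_sub hdvd2 hdvd1
  have hlt : 0 < j - i₀ := by omega
  have hle : 2 ^ v ≤ j - i₀ := Nat.le_of_dvd hlt hdvd3
  rw [hveq]
  omega
end

section
/- Let a ≥ 1 and let u < v ≤ m₂ ≤ 2^a − 1 be natural numbers, where the run R₃ occupies positions (u, v] (so its length is r₃ = v − u), its midpoint is m₃ := ⌊(u + v)/2⌋, and m₂ is the midpoint of the run R₂ above it. If r₃ ≥ 2^{a−p}, i.e., r₃ ≥ (n+1)/2^p, then the power of R₃ satisfies P(m₃, m₂) := min_{m₃ < i ≤ m₂} p(i) ≤ p, where p(i) = (a − 1) − ν₂(i). In particular, if r₃ ≥ (n+1)/2^{p₂}, where p₂ is the power of R₂, then p₃ ≤ p₂ and PowerSort's merge condition p₃ > p₂ is false. -/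
/-- Stopping condition for walk-back PowerSort: if the run `R₃` occupying positions
`(u, v]` has length `r₃ = v − u ≥ 2^(a−p) = (n+1)/2^p`, then its power — the power of
the interval from its midpoint `m₃ = ⌊(u+v)/2⌋` to the midpoint `m₂` of the run above
it — is at most `p`. In particular, taking `p = p₂`, PowerSort's merge condition
`p₃ > p₂` is false. -/
theorem long_run_small_power (a p u v m₂ : ℕ) (ha : 1 ≤ a) (huv : u < v)
    (hvm : v ≤ m₂) (hm : m₂ ≤ 2 ^ a - 1) (hr : 2 ^ (a - p) ≤ v - u) :
    intervalPower a ((u + v) / 2) m₂ ≤ p := by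
  set m₃ := (u + v) / 2 with hm₃
  have hm₃v : m₃ < v := by omega
  -- find i in (m₃, m₂] with indexPower a i ≤ p
  obtain ⟨i, hi, hip⟩ : ∃ i, i ∈ Set.Ioc m₃ m₂ ∧ indexPower a i ≤ p := by
    by_cases hp : a - 1 ≤ p
    · exact ⟨v, ⟨hm₃v, hvm⟩, le_trans (Nat.sub_le _ _) hp⟩
    · push_neg at hp
      set d := a - 1 - p with hd
      have hD1 : 1 ≤ 2 ^ d := Nat.one_le_two_pow
      have hap : a - p = d + 1 := by omega
      rw [hap, pow_succ] at hr
      -- m₂ - m₃ ≥ 2^d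
      have hgap : m₃ + 2 ^ d ≤ m₂ := by omega
      refine ⟨2 ^ d * (m₃ / 2 ^ d + 1), ⟨?_, ?_⟩, ?_⟩
      · have := Nat.div_add_mod m₃ (2 ^ d)
        have := Nat.mod_lt m₃ (show 0 < 2 ^ d by omega)
        have : 2 ^ d * (m₃ / 2 ^ d + 1) = 2 ^ d * (m₃ / 2 ^ d) + 2 ^ d := by ring
        omega
      · have := Nat.div_add_mod m₃ (2 ^ d)
        have := Nat.mod_lt m₃ (show 0 < 2 ^ d by omega)
        have : 2 ^ d * (m₃ / 2 ^ d + 1) = 2 ^ d * (m₃ / 2 ^ d) + 2 ^ d := by ring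
        omega
      · have hne : 2 ^ d * (m₃ / 2 ^ d + 1) ≠ 0 := by positivity
        have hdvd : (2 : ℕ) ^ d ∣ 2 ^ d * (m₃ / 2 ^ d + 1) := Dvd.intro _ rfl
        have := (padicValNat_dvd_iff_le (p := 2) hne).mp hdvd
        unfold indexPower
        omega
  calc intervalPower a m₃ m₂ ≤ indexPower a i :=
        Nat.sInf_le ⟨i, hi, rfl⟩
    _ ≤ p := hip
end

section
/- Let a ≥ 1 and let u < v ≤ m₂ ≤ 2^a − 1 be natural numbers, where a run occupies positions (u, v] with length r = v − u and midpoint m₃ := ⌊(u + v)/2⌋, and m₂ is the midpoint of the next run. Then the run's power satisfies P(m₃, m₂) := min_{m₃ < i ≤ m₂} p(i) ≤ a − ⌊log₂ r⌋, where p(i) = (a − 1) − ν₂(i) and ⌊log₂ ·⌋ is the natural-number base-2 logarithm (Nat.log 2). That is, a run of size r has power at most log₂((n+1)/r) + 1 ≈ log₂(n/r). -/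
lemma intervalPower_le_indexPower {a s e i : ℕ} (h : i ∈ Set.Ioc s e) :
    intervalPower a s e ≤ indexPower a i :=
  Nat.sInf_le ⟨i, h, rfl⟩

lemma indexPower_le_of_pow_dvd {a i k : ℕ} (hi : i ≠ 0) (hk : 2 ^ k ∣ i) :
    indexPower a i ≤ (a - 1) - k := by
  have : k ≤ padicValNat 2 i := (padicValNat_dvd_iff_le hi).mp hk
  unfold indexPower
  omega

lemma Nat.exists_dvd_mem_Ioc (s : ℕ) {d : ℕ} (hd : 0 < d) : ∃ i ∈ Set.Ioc s (s + d), d ∣ i := by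
  refine ⟨d * (s / d + 1), ⟨?_, ?_⟩, dvd_mul_right _ _⟩
  · have := Nat.lt_div_mul_add (a := s) hd
    rw [mul_add, mul_one, mul_comm]
    omega
  · have := Nat.div_mul_le_self s d
    rw [mul_add, mul_one, mul_comm]
    omega

lemma midpoint_add_two_pow_log_pred_le {u v : ℕ} (huv : u < v) :
    (u + v) / 2 + 2 ^ (Nat.log 2 (v - u) - 1) ≤ v := by
  rcases Nat.eq_zero_or_pos (Nat.log 2 (v - u)) with hL | hL
  · rw [hL]
    omega
  · have hpow : 2 ^ (Nat.log 2 (v - u) - 1) * 2 ≤ v - u := by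
      rw [← pow_succ, Nat.sub_add_cancel hL]
      exact Nat.pow_log_le_self 2 (by omega)
    omega

theorem run_power_le_log_general (a u v m₂ : ℕ) (huv : u < v)
    (hvm : v ≤ m₂) :
    intervalPower a ((u + v) / 2) m₂ ≤ a - Nat.log 2 (v - u) := by
  set k := Nat.log 2 (v - u) - 1
  obtain ⟨i, ⟨hi_gt, hi_le⟩, hdvd⟩ := Nat.exists_dvd_mem_Ioc ((u + v) / 2) (pow_pos two_pos k)
  have hi_mem : i ∈ Set.Ioc ((u + v) / 2) m₂ :=
    ⟨hi_gt, hi_le.trans ((midpoint_add_two_pow_log_pred_le huv).trans hvm)⟩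
  calc intervalPower a ((u + v) / 2) m₂
      ≤ indexPower a i := intervalPower_le_indexPower hi_mem
    _ ≤ (a - 1) - k := indexPower_le_of_pow_dvd (by omega) hdvd
    _ ≤ a - Nat.log 2 (v - u) := by omega

/-- A run of size `r = v − u` occupying positions `(u, v]`, with midpoint
`m₃ = ⌊(u+v)/2⌋` and next run's midpoint `m₂`, has power at most
`a − ⌊log₂ r⌋ ≈ log₂(n/r)`. -/
theorem run_power_le_log (a u v m₂ : ℕ) (ha : 1 ≤ a) (huv : u < v)
    (hvm : v ≤ m₂) (hm : m₂ ≤ 2 ^ a - 1) :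
    intervalPower a ((u + v) / 2) m₂ ≤ a - Nat.log 2 (v - u) :=
  run_power_le_log_general a u v m₂ huv hvm
end

section
/- Let n ≥ 4096 be a natural number, let λ := ⌈log₂ n⌉ + 1 (with ⌈log₂ n⌉ = Nat.clog 2 n), and let r₁, …, r_ρ be natural numbers with 1 ≤ rᵢ ≤ 3λ for every i, with total size m := Σᵢ rᵢ. Then Σᵢ rᵢ · log₂(n / rᵢ) ≥ (m/2) · log₂ n, where log₂ denotes Real.logb 2. In particular, the entropy contribution of the runs of size at most 3λ is Ω(m·log n), so sorting them in O(m·log m) time is paid for by their contribution to the entropy of the array. -/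
/-!
A short run has size `r ≤ 3λ`, and for `n ≥ 4096` the quadratic `9λ²` is dominated by
`2 ^ (λ - 2) < n`. Hence `r² ≤ n`, so every term satisfies `log₂ (n / r) ≥ ½ · log₂ n`.
-/

open Real Finset

theorem half_logb_le_logb_div_of_sq_le {b x r : ℝ} (hb : 1 < b) (hr : 0 < r)
    (hrx : r ^ 2 ≤ x) : logb b x / 2 ≤ logb b (x / r) := by
  have hx : 0 < x := lt_of_lt_of_le (by positivity) hrx
  have hlog : 2 * logb b r ≤ logb b x := by
    simpa [logb_pow] using logb_le_logb_of_le hb (by positivity) hrx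
  rw [logb_div hx.ne' hr.ne']
  linarith

theorem sum_div_two_mul_logb_le_sum_mul_logb_div {ι : Type*} (s : Finset ι) {b x : ℝ}
    (hb : 1 < b) {r : ι → ℝ} (hr : ∀ i ∈ s, 0 < r i ∧ r i ^ 2 ≤ x) :
    (∑ i ∈ s, r i) / 2 * logb b x ≤ ∑ i ∈ s, r i * logb b (x / r i) := by
  rw [sum_div, sum_mul]
  refine sum_le_sum fun i hi => ?_
  obtain ⟨hpos, hsq⟩ := hr i hi
  calc r i / 2 * logb b x = r i * (logb b x / 2) := by ring
    _ ≤ r i * logb b (x / r i) :=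
      mul_le_mul_of_nonneg_left (half_logb_le_logb_div_of_sq_le hb hpos hsq) hpos.le

theorem nine_mul_succ_sq_le_two_pow_pred {k : ℕ} (hk : 12 ≤ k) :
    9 * (k + 1) ^ 2 ≤ 2 ^ (k - 1) := by
  induction k, hk using Nat.le_induction with
  | base => norm_num
  | succ k hk ih =>
    have hstep : 9 * (k + 1 + 1) ^ 2 ≤ 2 * (9 * (k + 1) ^ 2) := by nlinarith
    have hpow : 2 ^ (k + 1 - 1) = 2 * 2 ^ (k - 1) := by
      rw [← pow_succ']
      congr 1
      omega
    omega

theorem three_mul_clog_succ_sq_le {n : ℕ} (hn : 4096 ≤ n) :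
    (3 * (Nat.clog 2 n + 1)) ^ 2 ≤ n := by
  have hk : 12 ≤ Nat.clog 2 n :=
    (Nat.lt_clog_iff_pow_lt (by norm_num)).mpr (by omega)
  calc (3 * (Nat.clog 2 n + 1)) ^ 2 = 9 * (Nat.clog 2 n + 1) ^ 2 := by ring
    _ ≤ 2 ^ (Nat.clog 2 n - 1) := nine_mul_succ_sq_le_two_pow_pred hk
    _ ≤ n := (Nat.pow_pred_clog_lt_self (by norm_num) (by omega)).le

/-- For `n ≥ 4096`, the entropy contribution of the short runs (those of size at most
`3λ` with `λ = ⌈log₂ n⌉ + 1`) is at least `(m/2)·log₂ n`, where `m` is their total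
size. Hence sorting them in `O(m log m)` time is paid for by their contribution to the
entropy of the array. -/
theorem short_runs_entropy_Omega (n ρ : ℕ) (hn : 4096 ≤ n) (r : Fin ρ → ℕ)
    (hr : ∀ i, 1 ≤ r i ∧ r i ≤ 3 * (Nat.clog 2 n + 1)) :
    ((∑ i, (r i : ℝ)) / 2) * Real.logb 2 (n : ℝ) ≤
      ∑ i, (r i : ℝ) * Real.logb 2 ((n : ℝ) / (r i : ℝ)) := by
  refine sum_div_two_mul_logb_le_sum_mul_logb_div _ one_lt_two fun i _ => ⟨?_, ?_⟩
  · exact_mod_cast (hr i).1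
  · exact_mod_cast (Nat.pow_le_pow_left (hr i).2 2).trans (three_mul_clog_succ_sq_le hn)
end

section
/- For every real number L ≥ 4, 11/8 + (L − 1)/(8L) + (1/8)·(1 − 1/L)·(3 + log₂(L/(L − 1))) ≤ 2, where log₂ denotes Real.logb 2. Consequently, the run-based entropy of the modified TimSort counterexample array — an array of size n with log₂ n = L whose maximal runs have sizes n/2, n/4, n/8, then n/(16·log₂ n) runs of size 2, and one run of size n/8 − n/(8·log₂ n), whose entropy equals exactly the displayed expression — is bounded by the constant 2. -/
/-- The run-based entropy of the modified TimSort counterexample array (runs of sizes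
`n/2, n/4, n/8`, then `n/(16 log₂ n)` runs of size 2, then one run of size
`n/8 − n/(8 log₂ n)`), which evaluates to the displayed expression with `L = log₂ n`,
is bounded by the constant 2 for every `L ≥ 4`. -/
theorem timsort_counterexample_entropy_constant (L : ℝ) (hL : 4 ≤ L) :
    11 / 8 + (L - 1) / (8 * L) +
      (1 / 8) * (1 - 1 / L) * (3 + Real.logb 2 (L / (L - 1))) ≤ 2 := by
  have hL0 : (0 : ℝ) < L := by linarith
  have hL1 : (0 : ℝ) < L - 1 := by linarith
  have hpos : 0 < L / (L - 1) := div_pos hL0 hL1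
  have hle2 : L / (L - 1) ≤ 2 := by
    rw [div_le_iff₀ hL1]; linarith
  have hge1 : 1 ≤ L / (L - 1) := by
    rw [le_div_iff₀ hL1]; linarith
  have hlog1 : Real.logb 2 (L / (L - 1)) ≤ 1 := by
    calc Real.logb 2 (L / (L - 1)) ≤ Real.logb 2 2 :=
          Real.logb_le_logb_of_le one_lt_two hpos hle2
      _ = 1 := Real.logb_self_eq_one one_lt_two
  have hlog0 : 0 ≤ Real.logb 2 (L / (L - 1)) :=
    Real.logb_nonneg one_lt_two hge1
  have h2 : (L - 1) / (8 * L) ≤ 1 / 8 := by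
    rw [div_le_div_iff₀ (by positivity) (by norm_num)]; linarith
  have h3 : 0 ≤ 1 - 1 / L := by
    have : 1 / L ≤ 1 := by rw [div_le_one hL0]; linarith
    linarith
  have h4 : 1 - 1 / L ≤ 1 := by nlinarith [one_div_pos.mpr hL0]
  have h5 : (1 / 8 : ℝ) * (1 - 1 / L) * (3 + Real.logb 2 (L / (L - 1))) ≤ 1 / 2 := by
    nlinarith [mul_le_mul h4 hlog1 hlog0 (zero_le_one)]
  linarith
end

section
/- Let n be a positive natural number divisible by 16, and consider the list of run lengths [n/2, n/4, n/8] followed by n/16 copies of 2. Then the run-based entropy of an array of size n with these maximal run sizes satisfies Σ_{r in the list} (r/n)·log₂(n/r) = (10 + log₂ n)/8, where log₂ denotes Real.logb 2 and natural numbers are coerced to reals. In particular this entropy is Ω(log n). -/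
lemma repl_aux (m : ℕ) :
    ((List.replicate m (2:ℕ)).flatMap fun a => [((a:ℕ):ℝ)]) = List.replicate m (2:ℝ) := by
  induction m with
  | zero => simp
  | succ k ih => simp [List.replicate_succ, ih]

/-- The run-based entropy of the TimSort counterexample array of size `n` — maximal
runs of sizes `n/2, n/4, n/8` followed by `n/16` runs of size `2` — equals
`(10 + log₂ n)/8`; in particular it is `Ω(log n)`. -/
theorem timsort_counterexample_entropy (n : ℕ) (hn : 0 < n) (h16 : 16 ∣ n) :
    (([n / 2, n / 4, n / 8] ++ List.replicate (n / 16) 2).map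
        (fun r => (r : ℝ) / (n : ℝ) * Real.logb 2 ((n : ℝ) / (r : ℝ)))).sum =
      (10 + Real.logb 2 (n : ℝ)) / 8 := by
  obtain ⟨m, rfl⟩ := h16
  have hm : 0 < m := by omega
  have h2 : 16 * m / 2 = 8 * m := by omega
  have h4 : 16 * m / 4 = 4 * m := by omega
  have h8 : 16 * m / 8 = 2 * m := by omega
  have h16' : 16 * m / 16 = m := by omega
  have hx : (0:ℝ) < (m:ℝ) := by exact_mod_cast hm
  simp only [h2, h4, h8, h16']
  simp [repl_aux, List.sum_replicate, Nat.cast_mul]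
  set x := (m:ℝ) with hxdef
  have e1 : (8*x)/(16*x) = 1/2 := by field_simp; ring
  have e2 : (16*x)/(8*x) = 2 := by field_simp; ring
  have e3 : (4*x)/(16*x) = 1/4 := by field_simp; ring
  have e4 : (16*x)/(4*x) = 4 := by field_simp; ring
  have e5 : (2*x)/(16*x) = 1/8 := by field_simp; ring
  have e6 : (16*x)/(2*x) = 8 := by field_simp; ring
  have e7 : (2:ℝ)/(16*x) = 1/(8*x) := by field_simp; ring
  have l2 : Real.logb 2 2 = 1 := Real.logb_self_eq_one (by norm_num)
  have l4 : Real.logb 2 4 = 2 := by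
    rw [show (4:ℝ) = 2^2 by norm_num, Real.logb_pow, l2]; norm_num
  have l8 : Real.logb 2 8 = 3 := by
    rw [show (8:ℝ) = 2^3 by norm_num, Real.logb_pow, l2]; norm_num
  have ldiv : Real.logb 2 ((16*x)/2) = Real.logb 2 (16*x) - 1 := by
    rw [Real.logb_div (by positivity) (by norm_num), l2]
  rw [e1, e2, e3, e4, e5, e6, e7, l2, l4, l8, ldiv]
  field_simp
  ring
end

section
/- Let α be a linearly ordered type, let λ ≥ 1 and r ≥ 2λ + 1 be natural numbers, and let f : Fin r → α be monotone (a non-decreasing run of length r). Let p := f(r − λ − 1) be the pivot and suppose the run is pivotable, i.e., f(λ − 1) < p. Let b : Fin λ → Bool be any bit string, and define g : Fin r → α from f by swapping positions i and r − λ + i whenever b(i) = false (for each i < λ), leaving all other positions unchanged. Then for every i < λ: p ≤ g(r − λ + i) if and only if b(i) = true. In particular, every element among the first λ positions of f is strictly less than p and every element among the last λ positions of f is at least p, so the bit string b can be encoded in and decoded from the last λ elements of the run by comparison with the pivot. -/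
/-- The pivot-encoding of a bit string `b` of length `lam` into a run `f` of length `r`:
for each `i < lam` with `b i = false`, the elements at positions `i` (in the first `lam`
elements `F`) and `r - lam + i` (in the last `lam` elements `L`) are swapped; all other
positions are unchanged. -/
def pivotEncode {α : Type*} (lam r : ℕ) (hlam : 1 ≤ lam) (hr : 2 * lam + 1 ≤ r)
    (f : Fin r → α) (b : Fin lam → Bool) : Fin r → α := fun j =>
  if hj : (j : ℕ) < lam then
    if b ⟨(j : ℕ), hj⟩ = false then f ⟨r - lam + (j : ℕ), by omega⟩ else f j
  else if hj₂ : r - lam ≤ (j : ℕ) then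
    if b ⟨(j : ℕ) - (r - lam), by have := j.isLt; omega⟩ = false then
      f ⟨(j : ℕ) - (r - lam), by have := j.isLt; omega⟩
    else f j
  else f j

/-- Correctness of pivot-encoding: if the monotone run `f` of length `r ≥ 2λ + 1` is
pivotable, i.e. the last element `f(λ−1)` of its first `λ` elements is strictly smaller
than the pivot `p = f(r−λ−1)`, then after encoding a bit string `b` by swapping
positions `i` and `r−λ+i` exactly when `b i = false`, the `i`-th bit can be decoded
from the last `λ` elements: `p ≤ g(r−λ+i)` iff `b i = true`. -/
theorem pivotEncode_decodes {α : Type*} [LinearOrder α] (lam r : ℕ)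
    (hlam : 1 ≤ lam) (hr : 2 * lam + 1 ≤ r) (f : Fin r → α) (hf : Monotone f)
    (hpiv : f ⟨lam - 1, by omega⟩ < f ⟨r - lam - 1, by omega⟩) (b : Fin lam → Bool) :
    ∀ i : Fin lam,
      (f ⟨r - lam - 1, by omega⟩ ≤
          pivotEncode lam r hlam hr f b ⟨r - lam + (i : ℕ), by have := i.isLt; omega⟩ ↔
        b i = true) := by
  intro i
  have hi := i.isLt
  unfold pivotEncode
  rw [dif_neg (by simp only [Fin.val_mk]; omega), dif_pos (by simp only [Fin.val_mk]; omega)]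
  have hsub : r - lam + (i : ℕ) - (r - lam) = (i : ℕ) := by omega
  rcases hb : b i with _ | _
  · have hb' : b ⟨r - lam + (i : ℕ) - (r - lam), by omega⟩ = false := by
      convert hb using 2; exact Fin.ext hsub
    rw [if_pos hb']
    simp only [hsub, hb, Bool.false_eq_true, iff_false, not_le]
    have h1 : f ⟨(i : ℕ), by omega⟩ ≤ f ⟨lam - 1, by omega⟩ := hf (by simp [Fin.le_def]; omega)
    exact lt_of_le_of_lt h1 hpiv
  · have hb' : ¬ b ⟨r - lam + (i : ℕ) - (r - lam), by omega⟩ = false := by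
      have : b ⟨r - lam + (i : ℕ) - (r - lam), by omega⟩ = true := by
        convert hb using 2; exact Fin.ext hsub
      simp [this]; try exact hb
    rw [if_neg hb']
    simp only [hb, iff_true]
    exact hf (by simp [Fin.le_def]; omega)
end
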